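/- Let r ≥ 3 and let ℓ, h be elements of a commutative ring (representing c₁(L) and c₁(H) in the cohomology ring of a surface) with ℓ² = 0 and (r-2)ℓh = (r-1)h². Set c₁ = ℓ + (r-1)h and c₂ = (r-1)ℓh + ((r-1)(r-2)/2)h². Then c₁² = r(r-1)ℓh and (2r(r-1)/(r²-2r+2))·c₂ = c₁², i.e. (r²-2r+2)c₁² - 2r(r-1)c₂ = 0. -/

import Mathlib

/-!
With `ℓ² = 0`, the relation `(r-2)ℓh = (r-1)h²` turns every occurrence of `h²` into a multiple
of `ℓh`: one finds `c₁² = r(r-1)ℓh` and `2c₂ = (r²-2r+2)ℓh`, so both sides of Lübke's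
inequality are the same multiple `r(r-1)(r²-2r+2)ℓh`.
-/

section LuebkeEquality

variable {R : Type*} [CommRing R] {r ℓ h c₁ c₂ t : R}

theorem chern_one_sq_eq (hℓ : ℓ ^ 2 = 0) (hss : (r - 2) * (ℓ * h) = (r - 1) * h ^ 2)
    (hc₁ : c₁ = ℓ + (r - 1) * h) : c₁ ^ 2 = r * (r - 1) * (ℓ * h) := by
  subst hc₁
  linear_combination hℓ - (r - 1) * hss

/-- `t` plays the role of the binomial coefficient `(r-1)(r-2)/2`. -/
theorem two_mul_chern_two_eq (hss : (r - 2) * (ℓ * h) = (r - 1) * h ^ 2)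
    (ht : 2 * t = (r - 1) * (r - 2)) (hc₂ : c₂ = (r - 1) * (ℓ * h) + t * h ^ 2) :
    2 * c₂ = (r ^ 2 - 2 * r + 2) * (ℓ * h) := by
  subst hc₂
  linear_combination h ^ 2 * ht - (r - 2) * hss

theorem luebke_defect_eq_zero (hc₁ : c₁ ^ 2 = r * (r - 1) * (ℓ * h))
    (hc₂ : 2 * c₂ = (r ^ 2 - 2 * r + 2) * (ℓ * h)) :
    (r ^ 2 - 2 * r + 2) * c₁ ^ 2 - 2 * r * (r - 1) * c₂ = 0 := by
  linear_combination (r ^ 2 - 2 * r + 2) * hc₁ - r * (r - 1) * hc₂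

end LuebkeEquality

/-- in the cohomology ring of the surface (a commutative ring), with
`ℓ² = 0` and `(r-2)ℓh = (r-1)h²`, setting `c₁ = ℓ + (r-1)h` and
`c₂ = (r-1)ℓh + ((r-1)(r-2)/2)h²`, one has `c₁² = r(r-1)ℓh` and
`(r²-2r+2)c₁² - 2r(r-1)c₂ = 0` (equality in Lübke's inequality). -/
theorem stmt_5 (r : ℕ) (hr : 3 ≤ r) {R : Type*} [CommRing R] (ℓ h : R)
    (hℓ : ℓ ^ 2 = 0) (hss : (r - 2) • (ℓ * h) = (r - 1) • (h ^ 2))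
    (c₁ c₂ : R) (hc₁ : c₁ = ℓ + (r - 1) • h)
    (hc₂ : c₂ = (r - 1) • (ℓ * h) + ((r - 1) * (r - 2) / 2) • h ^ 2) :
    c₁ ^ 2 = (r * (r - 1)) • (ℓ * h) ∧
      ((r : ℤ) ^ 2 - 2 * r + 2) • c₁ ^ 2 - (2 * (r : ℤ) * (r - 1)) • c₂ = 0 := by
  have hr₁ : ((r - 1 : ℕ) : R) = r - 1 := by rw [Nat.cast_sub (by omega), Nat.cast_one]
  have hr₂ : ((r - 2 : ℕ) : R) = r - 2 := by rw [Nat.cast_sub (by omega), Nat.cast_ofNat]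
  have ht : 2 * (((r - 1) * (r - 2) / 2 : ℕ) : R) = (r - 1) * (r - 2) := by
    have hdiv : 2 * ((r - 1) * (r - 2) / 2) = (r - 1) * (r - 2) :=
      Nat.two_mul_div_two_of_even (by simpa [Nat.sub_sub] using Nat.even_mul_pred_self (r - 1))
    rw [← hr₁, ← hr₂]
    exact_mod_cast congrArg (Nat.cast : ℕ → R) hdiv
  simp only [nsmul_eq_mul, zsmul_eq_mul, Nat.cast_mul, hr₁, hr₂] at hss hc₁ hc₂ ⊢
  have hsq := chern_one_sq_eq hℓ hss hc₁
  push_cast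
  exact ⟨hsq, luebke_defect_eq_zero hsq (two_mul_chern_two_eq hss ht hc₂)⟩
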